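/- arXiv:2302.02296 — 6 statements merged into one kernel-verified Lean document; each statement's English description precedes it below -/
import Mathlib

section
/- The group ℬ₂(ℤ/2) is trivial: in the abelian group generated by symbols (b₁,b₂) with b₁,b₂ ∈ ℤ/2 and ⟨b₁,b₂⟩ = ℤ/2, modulo the reordering relation (b₁,b₂) = (b₂,b₁) and the blow-up relation [(b₁,b₂) = (0,b₂) if b₁ = b₂, and (b₁,b₂) = (b₁−b₂,b₂) + (b₁,b₂−b₁) if b₁ ≠ b₂], every generator is equal to zero. -/
/-- Generators of the symbols group `𝒮₂(H)`: pairs `(b₁, b₂)` of elements of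
`H^∨` (identified with `H`) generating `H^∨`. -/
abbrev Gen2 (H : Type*) [AddCommGroup H] : Type _ :=
  {p : H × H // AddSubgroup.closure {p.1, p.2} = ⊤}

open FreeAbelianGroup in
/-- The reordering relation (O) and the blow-up relations (B) defining `ℬ₂(H)`. -/
def Rel2 (H : Type*) [AddCommGroup H] : Set (FreeAbelianGroup (Gen2 H)) :=
  {x | (∃ g g' : Gen2 H, g.1.1 = g'.1.2 ∧ g.1.2 = g'.1.1 ∧ x = of g - of g') ∨
       (∃ g g' : Gen2 H, g.1.1 = g.1.2 ∧ g'.1.1 = 0 ∧ g'.1.2 = g.1.2 ∧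
          x = of g - of g') ∨
       (∃ g g₁ g₂ : Gen2 H, g.1.1 ≠ g.1.2 ∧ g₁.1 = (g.1.1 - g.1.2, g.1.2) ∧
          g₂.1 = (g.1.1, g.1.2 - g.1.1) ∧ x = of g - of g₁ - of g₂)}

/-- The group `ℬ₂(H)`: the free abelian group on generating pairs modulo the
reordering and blow-up relations. -/
abbrev B2 (H : Type*) [AddCommGroup H] : Type _ :=
  FreeAbelianGroup (Gen2 H) ⧸ AddSubgroup.closure (Rel2 H)

/-!
Blowing up `(0, b)` gives `(0, b) = (-b, b) + (0, b)`, so `(-b, b)` vanishes in `ℬ₂(H)`.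
Over `ℤ/2` this is `(1, 1)`, which also equals `(0, 1)` by the blow-up relation for equal
entries, and `(1, 0)` is a reordering of `(0, 1)`; since these three pairs are all the
generators, the whole group vanishes.
-/

open FreeAbelianGroup

namespace B2

variable {H : Type*} [AddCommGroup H]

def sym (g : Gen2 H) : B2 H := QuotientAddGroup.mk (of g)

lemma sym_eq_of_swap {g g' : Gen2 H} (h₁ : g.1.1 = g'.1.2) (h₂ : g.1.2 = g'.1.1) :
    sym g = sym g' :=
  (QuotientAddGroup.eq_iff_sub_mem).2 <| AddSubgroup.subset_closure <| Or.inl ⟨g, g', h₁, h₂, rfl⟩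

lemma sym_eq_of_fst_eq_snd {g g' : Gen2 H} (h : g.1.1 = g.1.2) (h' : g'.1 = (0, g.1.2)) :
    sym g = sym g' :=
  (QuotientAddGroup.eq_iff_sub_mem).2 <| AddSubgroup.subset_closure <|
    Or.inr <| Or.inl ⟨g, g', h, by rw [h'], by rw [h'], rfl⟩

lemma sym_eq_add_of_fst_ne_snd {g g₁ g₂ : Gen2 H} (h : g.1.1 ≠ g.1.2)
    (h₁ : g₁.1 = (g.1.1 - g.1.2, g.1.2)) (h₂ : g₂.1 = (g.1.1, g.1.2 - g.1.1)) :
    sym g = sym g₁ + sym g₂ := by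
  rw [sym, sym, sym, ← QuotientAddGroup.mk_add, QuotientAddGroup.eq_iff_sub_mem, ← sub_sub]
  exact AddSubgroup.subset_closure <| Or.inr <| Or.inr ⟨g, g₁, g₂, h, h₁, h₂, rfl⟩

lemma sym_eq_zero_of_eq_neg_self {b : H} (hb : b ≠ 0) {g g' : Gen2 H} (hg : g.1 = (0, b))
    (hg' : g'.1 = (-b, b)) : sym g' = 0 := by
  have hblowup : sym g = sym g' + sym g :=
    sym_eq_add_of_fst_ne_snd (by rw [hg]; exact hb.symm) (by simp [hg, hg']) (by simp [hg])
  simpa using hblowup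

lemma subsingleton_of_forall_sym_eq_zero (h : ∀ g : Gen2 H, sym g = 0) :
    Subsingleton (B2 H) := by
  have hmk : QuotientAddGroup.mk' (AddSubgroup.closure (Rel2 H)) = 0 := lift_ext _ _ h
  refine subsingleton_of_forall_eq 0 fun x => ?_
  induction x using QuotientAddGroup.induction_on with
  | H a => exact DFunLike.congr_fun hmk a

end B2

lemma Gen2.val_ne_zero {H : Type*} [AddCommGroup H] [Nontrivial H] (g : Gen2 H) : g.1 ≠ 0 := by
  intro hg
  have hclosure := g.2
  rw [hg, Prod.fst_zero, Prod.snd_zero, Set.pair_eq_singleton,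
    AddSubgroup.closure_singleton_zero] at hclosure
  exact bot_ne_top hclosure

lemma ZMod.addSubgroup_eq_top_of_one_mem {n : ℕ} {s : AddSubgroup (ZMod n)} (h : 1 ∈ s) :
    s = ⊤ :=
  eq_top_iff.2 fun x _ => by
    obtain ⟨k, rfl⟩ := ZMod.intCast_surjective x
    simpa using s.zsmul_mem h k

open B2 in
/-- `ℬ₂(ℤ/2)` is trivial: every generator is equal to zero in the quotient. -/
theorem B2_zmod2_trivial :
    Subsingleton (B2 (ZMod 2)) ∧
      ∀ g : Gen2 (ZMod 2),
        (QuotientAddGroup.mk (FreeAbelianGroup.of g) : B2 (ZMod 2)) = 0 := by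
  let gen (a : ZMod 2) : Gen2 (ZMod 2) :=
    ⟨(a, 1), ZMod.addSubgroup_eq_top_of_one_mem (AddSubgroup.subset_closure (by simp))⟩
  have h11 : sym (gen 1) = 0 := sym_eq_zero_of_eq_neg_self one_ne_zero (g := gen 0) rfl rfl
  have h01 : sym (gen 0) = 0 := (sym_eq_of_fst_eq_snd rfl rfl).symm.trans h11
  have hsym : ∀ g : Gen2 (ZMod 2), sym g = 0 := by
    rintro ⟨⟨a, b⟩, hg⟩
    fin_cases a <;> fin_cases b
    · exact absurd rfl (Gen2.val_ne_zero ⟨_, hg⟩)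
    · exact h01
    · exact (sym_eq_of_swap rfl rfl).trans h01
    · exact h11
  exact ⟨subsingleton_of_forall_sym_eq_zero hsym, hsym⟩
end

section
/- The group ℬ₂(ℤ/3) is infinite cyclic: the abelian group generated by symbols (b₁,b₂) with b₁,b₂ ∈ ℤ/3 and ⟨b₁,b₂⟩ = ℤ/3, modulo the reordering relation and the blow-up relations, is isomorphic to ℤ. -/
/-!
Blowing up `(0,1)` and `(0,2)` gives `(2,1) = (1,2) = 0`, and blowing up
`(1,2) = (2,2) + (1,1)` then gives `(0,2) = -(0,1)`; with reordering and `(b,b) = (0,b)` every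
symbol becomes an integer multiple of `(0,1)`. Conversely, reading off these multiples defines a
weight on symbols that respects all relations and sends `(0,1)` to `1`, so `(0,1)` has infinite
order.
-/

open FreeAbelianGroup

theorem ZMod.closure_one_eq_top (n : ℕ) : AddSubgroup.closure {(1 : ZMod n)} = ⊤ :=
  (AddSubgroup.eq_top_iff' _).2 fun x => by
    have := zsmul_mem (AddSubgroup.subset_closure (Set.mem_singleton (1 : ZMod n))) (x.cast : ℤ)
    rwa [zsmul_one, ZMod.intCast_zmod_cast] at this

theorem AddSubgroup.closure_pair_sub_left {H : Type*} [AddCommGroup H] (a b : H) :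
    closure {a - b, b} = closure {a, b} := by
  apply le_antisymm <;> rw [closure_le, Set.pair_subset_iff] <;>
    refine ⟨?_, subset_closure (by simp)⟩
  · exact sub_mem (subset_closure (by simp)) (subset_closure (by simp))
  · simpa using add_mem (subset_closure (Set.mem_insert (a - b) {b}))
      (subset_closure (Set.mem_insert_of_mem _ rfl))

namespace B2

variable {H : Type*} [AddCommGroup H]

open Classical in
/-- The class of `(a, b)` in `ℬ₂(H)`, and `0` when `a, b` do not generate `H`, so that the
relations below hold for all `a, b`. -/
noncomputable def symb (a b : H) : B2 H :=
  if h : AddSubgroup.closure {a, b} = ⊤ then QuotientAddGroup.mk (of ⟨(a, b), h⟩) else 0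

theorem symb_of_gen (g : Gen2 H) : symb g.1.1 g.1.2 = QuotientAddGroup.mk (of g) := by
  rw [symb, dif_pos g.2]

theorem mk_of_eq_of_mem_rel {g g' : Gen2 H} (h : of g - of g' ∈ Rel2 H) :
    (QuotientAddGroup.mk (of g) : B2 H) = QuotientAddGroup.mk (of g') :=
  QuotientAddGroup.eq_iff_sub_mem.2 (AddSubgroup.subset_closure h)

theorem symb_comm (a b : H) : symb a b = symb b a := by
  have hc : AddSubgroup.closure {b, a} = AddSubgroup.closure {a, b} := by rw [Set.pair_comm]
  by_cases h : AddSubgroup.closure {a, b} = ⊤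
  · rw [symb, symb, dif_pos h, dif_pos (hc.trans h)]
    exact mk_of_eq_of_mem_rel (Or.inl ⟨_, _, rfl, rfl, rfl⟩)
  · rw [symb, symb, dif_neg h, dif_neg (hc ▸ h)]

theorem symb_self (b : H) : symb b b = symb 0 b := by
  have hc : AddSubgroup.closure {0, b} = AddSubgroup.closure {b, b} := by
    rw [AddSubgroup.closure_insert_zero, Set.pair_eq_singleton]
  by_cases h : AddSubgroup.closure {b, b} = ⊤
  · rw [symb, symb, dif_pos h, dif_pos (hc.trans h)]
    exact mk_of_eq_of_mem_rel
      (Or.inr (Or.inl ⟨⟨(b, b), h⟩, ⟨(0, b), hc.trans h⟩, rfl, rfl, rfl, rfl⟩))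
  · rw [symb, symb, dif_neg h, dif_neg (hc ▸ h)]

theorem symb_blowup {a b : H} (hab : a ≠ b) : symb a b = symb (a - b) b + symb a (b - a) := by
  have h₁ : AddSubgroup.closure {a - b, b} = AddSubgroup.closure {a, b} :=
    AddSubgroup.closure_pair_sub_left a b
  have h₂ : AddSubgroup.closure {a, b - a} = AddSubgroup.closure {a, b} := by
    rw [Set.pair_comm, AddSubgroup.closure_pair_sub_left, Set.pair_comm]
  by_cases h : AddSubgroup.closure {a, b} = ⊤
  · rw [symb, symb, symb, dif_pos h, dif_pos (h₁.trans h), dif_pos (h₂.trans h),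
      ← QuotientAddGroup.mk_add, QuotientAddGroup.eq_iff_sub_mem, ← sub_sub]
    exact AddSubgroup.subset_closure (Or.inr (Or.inr ⟨_, _, _, hab, rfl, rfl, rfl⟩))
  · rw [symb, symb, symb, dif_neg h, dif_neg (h₁ ▸ h), dif_neg (h₂ ▸ h), add_zero]

end B2

namespace B2ZMod3

open B2

/-- `weight a b` is `1` on `(0,1), (1,0), (1,1)`, `-1` on `(0,2), (2,0), (2,2)` and `0` on
`(1,2), (2,1)`: the coefficient of the symbol `(a, b)` as a multiple of `(0, 1)`. -/
def weight (a b : ZMod 3) : ℤ :=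
  (if a = 2 ∨ b = 2 then 0 else 1) - (if a = 1 ∨ b = 1 then 0 else 1)

theorem weight_comm : ∀ a b : ZMod 3, weight a b = weight b a := by decide

theorem weight_self : ∀ b : ZMod 3, weight b b = weight 0 b := by decide

theorem weight_blowup :
    ∀ a b : ZMod 3, a ≠ b → weight a b = weight (a - b) b + weight a (b - a) := by
  decide

noncomputable def weightHom : B2 (ZMod 3) →+ ℤ :=
  QuotientAddGroup.lift _ (lift fun g => weight g.1.1 g.1.2) <| (AddSubgroup.closure_le _).2 <| by
    rintro x (⟨g, g', h₁, h₂, rfl⟩ | ⟨g, g', h₁, h₂, h₃, rfl⟩ | ⟨g, g₁, g₂, hne, h₁, h₂, rfl⟩)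
    all_goals simp only [SetLike.mem_coe, AddMonoidHom.mem_ker, map_sub, lift_apply_of]
    · rw [h₁, h₂, weight_comm, sub_self]
    · rw [h₁, h₂, h₃, weight_self, sub_self]
    · rw [h₁, h₂, weight_blowup _ _ hne, sub_sub, sub_self]

theorem weightHom_mk_of (g : Gen2 (ZMod 3)) :
    weightHom (QuotientAddGroup.mk (of g)) = weight g.1.1 g.1.2 :=
  lift_apply_of _ g

theorem weightHom_symb_zero_one : weightHom (symb 0 1) = 1 := by
  have h : AddSubgroup.closure {(0 : ZMod 3), 1} = ⊤ := by
    rw [AddSubgroup.closure_insert_zero, ZMod.closure_one_eq_top]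
  rw [symb, dif_pos h, weightHom_mk_of]
  rfl

theorem symb_two_one : symb (2 : ZMod 3) 1 = 0 := by
  have h := symb_blowup (show (0 : ZMod 3) ≠ 1 by decide)
  rwa [show (0 - 1 : ZMod 3) = 2 by decide, sub_zero, eq_comm, add_eq_right] at h

theorem symb_one_two : symb (1 : ZMod 3) 2 = 0 := by
  have h := symb_blowup (show (0 : ZMod 3) ≠ 2 by decide)
  rwa [show (0 - 2 : ZMod 3) = 1 by decide, sub_zero, eq_comm, add_eq_right] at h

theorem symb_zero_two : symb (0 : ZMod 3) 2 = -symb 0 1 := by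
  have h := symb_blowup (show (1 : ZMod 3) ≠ 2 by decide)
  rwa [show (1 - 2 : ZMod 3) = 2 by decide, show (2 - 1 : ZMod 3) = 1 by decide, symb_one_two,
    symb_self, symb_self, eq_comm, add_eq_zero_iff_eq_neg] at h

theorem mk_of_eq_weight_smul (g : Gen2 (ZMod 3)) :
    QuotientAddGroup.mk (of g) = weight g.1.1 g.1.2 • symb 0 1 := by
  obtain ⟨⟨a, b⟩, h⟩ := g
  rw [← symb_of_gen]
  dsimp only
  rcases (by decide : ∀ x : ZMod 3, x = 0 ∨ x = 1 ∨ x = 2) a with rfl | rfl | rfl <;>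
    rcases (by decide : ∀ x : ZMod 3, x = 0 ∨ x = 1 ∨ x = 2) b with rfl | rfl | rfl
  · simp only [Set.pair_eq_singleton, AddSubgroup.closure_singleton_zero] at h
    exact absurd h bot_ne_top
  all_goals simp +decide [weight, symb_comm (1 : ZMod 3) 0, symb_comm (2 : ZMod 3) 0,
    symb_self (1 : ZMod 3), symb_self (2 : ZMod 3), symb_zero_two, symb_one_two, symb_two_one]

end B2ZMod3

open B2 B2ZMod3

/-- `ℬ₂(ℤ/3)` is infinite cyclic: it is isomorphic to `ℤ`. -/
theorem B2_zmod3_isomorphic_int : Nonempty (B2 (ZMod 3) ≃+ ℤ) := by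
  refine ⟨weightHom.toAddEquiv (zmultiplesHom _ (symb 0 1)) ?_ ?_⟩
  · refine QuotientAddGroup.addMonoidHom_ext _ (lift_ext _ _ fun g => ?_)
    simp [mk_of_eq_weight_smul g, weightHom_symb_zero_one]
  · ext
    simp [weightHom_symb_zero_one]
end

section
/- Let A be an abelian group and let T be the set of triples (b₁,b₂,b₃) of nonzero elements of ℤ/4 such that ⟨b₁,b₂,b₃⟩ = ℤ/4. Suppose s : T → A satisfies: (i) s is invariant under permutations of the entries; (ii) s(b₁,b₂,b₃) = 0 whenever some nonempty subset of {b₁,b₂,b₃} sums to 0 in ℤ/4; (iii) s(b₁,b₂,b₃) = s(b₁−b₂,b₂,b₃) + s(b₁,b₂−b₁,b₃) whenever b₁ ≠ b₂, all entries appearing are nonzero, and some bᵢ lies in the subgroup ⟨b₁−b₂⟩. Then s(1,1,1) = 0 and s(3,3,3) = 0. -/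
/-- Membership in `T`: a triple of nonzero elements of `ℤ/4` generating `ℤ/4`. -/
def genT4 (b₁ b₂ b₃ : ZMod 4) : Prop :=
  b₁ ≠ 0 ∧ b₂ ≠ 0 ∧ b₃ ≠ 0 ∧ AddSubgroup.closure ({b₁, b₂, b₃} : Set (ZMod 4)) = ⊤

lemma gen4_of_mem {S : Set (ZMod 4)} {u : ZMod 4} (hu : IsUnit u) (h : u ∈ S) :
    AddSubgroup.closure S = ⊤ := by
  rw [AddSubgroup.eq_top_iff']
  intro x
  obtain ⟨v, hv⟩ := hu.exists_left_inv
  have : x = (v * x).val • u := by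
    simp [nsmul_eq_mul, ZMod.natCast_val, ZMod.cast_id]
    calc x = (v * u) * x := by rw [hv]; ring
    _ = v * x * u := by ring
  rw [this]
  exact AddSubgroup.nsmul_mem _ (AddSubgroup.subset_closure h) _

lemma zmul4_of_unit {u x : ZMod 4} (hu : IsUnit u) : x ∈ AddSubgroup.zmultiples u := by
  obtain ⟨v, hv⟩ := hu.exists_left_inv
  refine ⟨((v * x).val : ℤ), ?_⟩
  simp [zsmul_eq_mul, ZMod.natCast_val, ZMod.cast_id]
  calc v * x * u = (v * u) * x := by ring
  _ = x := by rw [hv]; ring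

/-- Vanishing of the point classes `(1,1,1)` and `(3,3,3)` with stabilizer `C₄`:
any function `s` on `T` with values in an abelian group `A` satisfying
(i) permutation invariance, (ii) the vanishing relation when a nonempty subset of
the entries sums to `0`, and (iii) the blow-up relation when `b₁ ≠ b₂`, all
entries appearing are nonzero, and some `bᵢ` lies in `⟨b₁ - b₂⟩`,
kills `(1,1,1)` and `(3,3,3)`. -/
theorem c4_point_classes_vanish (A : Type*) [AddCommGroup A]
    (s : ZMod 4 → ZMod 4 → ZMod 4 → A)
    (hswap₁ : ∀ b₁ b₂ b₃, genT4 b₁ b₂ b₃ → s b₁ b₂ b₃ = s b₂ b₁ b₃)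
    (hswap₂ : ∀ b₁ b₂ b₃, genT4 b₁ b₂ b₃ → s b₁ b₂ b₃ = s b₁ b₃ b₂)
    (hvan : ∀ b₁ b₂ b₃, genT4 b₁ b₂ b₃ →
      (b₁ = 0 ∨ b₂ = 0 ∨ b₃ = 0 ∨ b₁ + b₂ = 0 ∨ b₁ + b₃ = 0 ∨ b₂ + b₃ = 0 ∨
        b₁ + b₂ + b₃ = 0) → s b₁ b₂ b₃ = 0)
    (hblow : ∀ b₁ b₂ b₃, genT4 b₁ b₂ b₃ → b₁ ≠ b₂ →
      b₁ - b₂ ≠ 0 → b₂ - b₁ ≠ 0 →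
      (b₁ ∈ AddSubgroup.zmultiples (b₁ - b₂) ∨ b₂ ∈ AddSubgroup.zmultiples (b₁ - b₂) ∨
        b₃ ∈ AddSubgroup.zmultiples (b₁ - b₂)) →
      s b₁ b₂ b₃ = s (b₁ - b₂) b₂ b₃ + s b₁ (b₂ - b₁) b₃) :
    s 1 1 1 = 0 ∧ s 3 3 3 = 0 := by
  have u1 : IsUnit (1 : ZMod 4) := by decide
  have u3 : IsUnit (3 : ZMod 4) := by decide
  constructor
  · -- blow up (2,1,1)
    have hg : genT4 2 1 1 :=
      ⟨by decide, by decide, by decide, gen4_of_mem u1 (by simp)⟩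
    have hb := hblow 2 1 1 hg (by decide) (by decide) (by decide)
      (Or.inl (by norm_num; exact zmul4_of_unit u1))
    have e1 : (2 : ZMod 4) - 1 = 1 := by decide
    have e2 : (1 : ZMod 4) - 2 = 3 := by decide
    rw [e1, e2] at hb
    have v1 : s 2 1 1 = 0 := hvan 2 1 1 hg (by decide)
    have v2 : s 2 3 1 = 0 := hvan 2 3 1
      ⟨by decide, by decide, by decide, gen4_of_mem u1 (by simp)⟩ (by decide)
    rw [v1, v2, add_zero] at hb
    exact hb.symm
  · -- blow up (2,3,3)
    have hg : genT4 2 3 3 :=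
      ⟨by decide, by decide, by decide, gen4_of_mem u3 (by simp)⟩
    have e1 : (2 : ZMod 4) - 3 = 3 := by decide
    have e2 : (3 : ZMod 4) - 2 = 1 := by decide
    have hb := hblow 2 3 3 hg (by decide) (by rw [e1]; decide) (by rw [e2]; decide)
      (Or.inr (Or.inl (by rw [e1]; exact zmul4_of_unit u3)))
    rw [e1, e2] at hb
    have v1 : s 2 3 3 = 0 := hvan 2 3 3 hg (by decide)
    have v2 : s 2 1 3 = 0 := hvan 2 1 3
      ⟨by decide, by decide, by decide, gen4_of_mem u1 (by simp)⟩ (by decide)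
    rw [v1, v2, add_zero] at hb
    exact hb.symm
end

section
/- Let A be an abelian group and let T be the set of triples (b₁,b₂,b₃) of nonzero elements of ℤ/5. Suppose s : T → A satisfies: (i) s is invariant under permutations; (ii) s(b₁,b₂,b₃) = 0 whenever some nonempty subset of the entries sums to 0 in ℤ/5; (iii) s(b₁,b₂,b₃) = s(b₁−b₂,b₂,b₃) + s(b₁,b₂−b₁,b₃) whenever b₁ ≠ b₂; (iv) s(b,b,c) = s(b,c,c) for all nonzero b,c (reduction to point classes along a ℙ¹). Then s is identically zero. -/
/-- Vanishing of all point classes with stabilizer `C₅`: any function `s` on the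
set `T` of triples of nonzero elements of `ℤ/5`, with values in an abelian group
`A`, satisfying (i) permutation invariance, (ii) the vanishing relation when a
nonempty subset of the entries sums to `0`, (iii) the blow-up relation whenever
`b₁ ≠ b₂`, and (iv) the reduction `s(b,b,c) = s(b,c,c)` along a `ℙ¹`,
is identically zero. -/
theorem c5_point_classes_vanish (A : Type*) [AddCommGroup A]
    (s : ZMod 5 → ZMod 5 → ZMod 5 → A)
    (hswap₁ : ∀ b₁ b₂ b₃ : ZMod 5, b₁ ≠ 0 → b₂ ≠ 0 → b₃ ≠ 0 →
      s b₁ b₂ b₃ = s b₂ b₁ b₃)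
    (hswap₂ : ∀ b₁ b₂ b₃ : ZMod 5, b₁ ≠ 0 → b₂ ≠ 0 → b₃ ≠ 0 →
      s b₁ b₂ b₃ = s b₁ b₃ b₂)
    (hvan : ∀ b₁ b₂ b₃ : ZMod 5, b₁ ≠ 0 → b₂ ≠ 0 → b₃ ≠ 0 →
      (b₁ = 0 ∨ b₂ = 0 ∨ b₃ = 0 ∨ b₁ + b₂ = 0 ∨ b₁ + b₃ = 0 ∨ b₂ + b₃ = 0 ∨
        b₁ + b₂ + b₃ = 0) → s b₁ b₂ b₃ = 0)
    (hblow : ∀ b₁ b₂ b₃ : ZMod 5, b₁ ≠ 0 → b₂ ≠ 0 → b₃ ≠ 0 → b₁ ≠ b₂ →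
      s b₁ b₂ b₃ = s (b₁ - b₂) b₂ b₃ + s b₁ (b₂ - b₁) b₃)
    (hred : ∀ b c : ZMod 5, b ≠ 0 → c ≠ 0 → s b b c = s b c c) :
    ∀ b₁ b₂ b₃ : ZMod 5, b₁ ≠ 0 → b₂ ≠ 0 → b₃ ≠ 0 → s b₁ b₂ b₃ = 0 := by
  -- the 112 class
  have h122 : s 1 2 2 = 0 := hvan 1 2 2 (by decide) (by decide) (by decide) (by decide)
  have h112 : s 1 1 2 = 0 := (hred 1 2 (by decide) (by decide)).trans h122
  have h121 : s 1 2 1 = 0 :=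
    (hswap₂ 1 2 1 (by decide) (by decide) (by decide)).trans h112
  have h211 : s 2 1 1 = 0 :=
    (hswap₁ 2 1 1 (by decide) (by decide) (by decide)).trans h121
  -- the 133 class
  have h113 : s 1 1 3 = 0 := hvan 1 1 3 (by decide) (by decide) (by decide) (by decide)
  have h133 : s 1 3 3 = 0 := (hred 1 3 (by decide) (by decide)).symm.trans h113
  have h313 : s 3 1 3 = 0 :=
    (hswap₁ 3 1 3 (by decide) (by decide) (by decide)).trans h133
  have h331 : s 3 3 1 = 0 :=
    (hswap₂ 3 3 1 (by decide) (by decide) (by decide)).trans h313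
  -- the 224 class
  have h244 : s 2 4 4 = 0 := hvan 2 4 4 (by decide) (by decide) (by decide) (by decide)
  have h224 : s 2 2 4 = 0 := (hred 2 4 (by decide) (by decide)).trans h244
  have h242 : s 2 4 2 = 0 :=
    (hswap₂ 2 4 2 (by decide) (by decide) (by decide)).trans h224
  have h422 : s 4 2 2 = 0 :=
    (hswap₁ 4 2 2 (by decide) (by decide) (by decide)).trans h242
  -- the 344 class
  have h334 : s 3 3 4 = 0 := hvan 3 3 4 (by decide) (by decide) (by decide) (by decide)
  have h344 : s 3 4 4 = 0 := (hred 3 4 (by decide) (by decide)).symm.trans h334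
  have h434 : s 4 3 4 = 0 :=
    (hswap₁ 4 3 4 (by decide) (by decide) (by decide)).trans h344
  have h443 : s 4 4 3 = 0 :=
    (hswap₂ 4 4 3 (by decide) (by decide) (by decide)).trans h434
  -- diagonal classes via blow-up relations
  have h111 : s 1 1 1 = 0 := by
    have e := hblow 2 1 1 (by decide) (by decide) (by decide) (by decide)
    have e1 : (2 - 1 : ZMod 5) = 1 := by decide
    have e2 : (1 - 2 : ZMod 5) = 4 := by decide
    rw [e1, e2, h211, hvan 2 4 1 (by decide) (by decide) (by decide) (by decide)] at e
    simpa using e.symm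
  have h222 : s 2 2 2 = 0 := by
    have e := hblow 4 2 2 (by decide) (by decide) (by decide) (by decide)
    have e1 : (4 - 2 : ZMod 5) = 2 := by decide
    have e2 : (2 - 4 : ZMod 5) = 3 := by decide
    rw [e1, e2, h422, hvan 4 3 2 (by decide) (by decide) (by decide) (by decide)] at e
    simpa using e.symm
  have h333 : s 3 3 3 = 0 := by
    have e := hblow 1 3 3 (by decide) (by decide) (by decide) (by decide)
    have e1 : (1 - 3 : ZMod 5) = 3 := by decide
    have e2 : (3 - 1 : ZMod 5) = 2 := by decide
    rw [e1, e2, h133, hvan 1 2 3 (by decide) (by decide) (by decide) (by decide)] at e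
    simpa using e.symm
  have h444 : s 4 4 4 = 0 := by
    have e := hblow 3 4 4 (by decide) (by decide) (by decide) (by decide)
    have e1 : (3 - 4 : ZMod 5) = 4 := by decide
    have e2 : (4 - 3 : ZMod 5) = 1 := by decide
    rw [e1, e2, h344, hvan 3 1 4 (by decide) (by decide) (by decide) (by decide)] at e
    simpa using e.symm
  -- now enumerate all triples of nonzero elements
  have hmem : ∀ b : ZMod 5, b ≠ 0 → b = 1 ∨ b = 2 ∨ b = 3 ∨ b = 4 := by decide
  intro b₁ b₂ b₃ h1 h2 h3
  rcases hmem b₁ h1 with rfl | rfl | rfl | rfl <;>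
    rcases hmem b₂ h2 with rfl | rfl | rfl | rfl <;>
    rcases hmem b₃ h3 with rfl | rfl | rfl | rfl <;>
    first
      | assumption
      | exact hvan _ _ _ (by decide) (by decide) (by decide) (by decide)
end

section
/- Let A be an abelian group and let T be the set of triples (b₁,b₂,b₃) of nonzero elements of ℤ/6 with ⟨b₁,b₂,b₃⟩ = ℤ/6. Suppose s : T → A satisfies: (i) s is invariant under permutations; (ii) s(b₁,b₂,b₃) = 0 whenever some nonempty subset of the entries sums to 0 in ℤ/6; (iii) s(b₁,b₂,b₃) = s(b₁−b₂,b₂,b₃) + s(b₁,b₂−b₁,b₃) whenever b₁ ≠ b₂ and all entries appearing are nonzero and generate ℤ/6 (terms with entries not generating ℤ/6 being interpreted as 0). Then s is identically zero. -/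
/-- Membership in `T`: a triple of nonzero elements of `ℤ/6` generating `ℤ/6`. -/
def genT6 (b₁ b₂ b₃ : ZMod 6) : Prop :=
  b₁ ≠ 0 ∧ b₂ ≠ 0 ∧ b₃ ≠ 0 ∧ AddSubgroup.closure ({b₁, b₂, b₃} : Set (ZMod 6)) = ⊤

lemma mul_mem_closure {H : AddSubgroup (ZMod 6)} {b : ZMod 6} (x : ZMod 6) (hb : b ∈ H) :
    x * b ∈ H := by
  have : x * b = x.val • b := by
    rw [nsmul_eq_mul, ZMod.natCast_val, ZMod.cast_id]
  rw [this]
  exact nsmul_mem hb _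

lemma genT6_iff (b₁ b₂ b₃ : ZMod 6) :
    genT6 b₁ b₂ b₃ ↔ (b₁ ≠ 0 ∧ b₂ ≠ 0 ∧ b₃ ≠ 0 ∧
      ∃ x y z : ZMod 6, x * b₁ + y * b₂ + z * b₃ = 1) := by
  constructor
  · rintro ⟨h1, h2, h3, htop⟩
    refine ⟨h1, h2, h3, ?_⟩
    let S : AddSubgroup (ZMod 6) :=
      { carrier := {w | ∃ x y z : ZMod 6, x * b₁ + y * b₂ + z * b₃ = w}
        zero_mem' := ⟨0, 0, 0, by ring⟩
        add_mem' := by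
          rintro a b ⟨x, y, z, rfl⟩ ⟨x', y', z', rfl⟩
          exact ⟨x + x', y + y', z + z', by ring⟩
        neg_mem' := by
          rintro a ⟨x, y, z, rfl⟩
          exact ⟨-x, -y, -z, by ring⟩ }
    have hle : AddSubgroup.closure ({b₁, b₂, b₃} : Set (ZMod 6)) ≤ S := by
      rw [AddSubgroup.closure_le]
      rintro w (rfl | rfl | rfl)
      · exact ⟨1, 0, 0, by ring⟩
      · exact ⟨0, 1, 0, by ring⟩
      · exact ⟨0, 0, 1, by ring⟩
    have : (1 : ZMod 6) ∈ S := hle (htop ▸ AddSubgroup.mem_top 1)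
    exact this
  · rintro ⟨h1, h2, h3, x, y, z, hxyz⟩
    refine ⟨h1, h2, h3, ?_⟩
    rw [AddSubgroup.eq_top_iff']
    intro g
    have hb1 : b₁ ∈ AddSubgroup.closure ({b₁, b₂, b₃} : Set (ZMod 6)) :=
      AddSubgroup.subset_closure (by simp)
    have hb2 : b₂ ∈ AddSubgroup.closure ({b₁, b₂, b₃} : Set (ZMod 6)) :=
      AddSubgroup.subset_closure (by simp)
    have hb3 : b₃ ∈ AddSubgroup.closure ({b₁, b₂, b₃} : Set (ZMod 6)) :=
      AddSubgroup.subset_closure (by simp)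
    have h1m : (1 : ZMod 6) ∈ AddSubgroup.closure ({b₁, b₂, b₃} : Set (ZMod 6)) := by
      rw [← hxyz]
      exact add_mem (add_mem (mul_mem_closure x hb1) (mul_mem_closure y hb2))
        (mul_mem_closure z hb3)
    have : g = g * 1 := by ring
    rw [this]
    exact mul_mem_closure g h1m


instance genT6.decidable (b₁ b₂ b₃ : ZMod 6) : Decidable (genT6 b₁ b₂ b₃) :=
  decidable_of_iff _ (genT6_iff b₁ b₂ b₃).symm


/-- Triviality of point classes with stabilizer `C₆` (Lemma on trivial point
classes for `m = 6`): any function `s` on `T` with values in an abelian group,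
satisfying (i) permutation invariance, (ii) the vanishing relation when a
nonempty subset of the entries sums to `0`, and (iii) the blow-up relation
(in which a term whose entries do not generate `ℤ/6` is interpreted as `0`),
is identically zero. -/
theorem c6_point_classes_vanish (A : Type*) [AddCommGroup A]
    (s : ZMod 6 → ZMod 6 → ZMod 6 → A)
    (hswap₁ : ∀ b₁ b₂ b₃, genT6 b₁ b₂ b₃ → s b₁ b₂ b₃ = s b₂ b₁ b₃)
    (hswap₂ : ∀ b₁ b₂ b₃, genT6 b₁ b₂ b₃ → s b₁ b₂ b₃ = s b₁ b₃ b₂)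
    (hvan : ∀ b₁ b₂ b₃, genT6 b₁ b₂ b₃ →
      (b₁ = 0 ∨ b₂ = 0 ∨ b₃ = 0 ∨ b₁ + b₂ = 0 ∨ b₁ + b₃ = 0 ∨ b₂ + b₃ = 0 ∨
        b₁ + b₂ + b₃ = 0) → s b₁ b₂ b₃ = 0)
    (hblow : ∀ b₁ b₂ b₃, genT6 b₁ b₂ b₃ → b₁ ≠ b₂ →
      b₁ - b₂ ≠ 0 → b₂ - b₁ ≠ 0 →
      ∀ t₁ t₂ : A,
        ((genT6 (b₁ - b₂) b₂ b₃ ∧ t₁ = s (b₁ - b₂) b₂ b₃) ∨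
          (¬ genT6 (b₁ - b₂) b₂ b₃ ∧ t₁ = 0)) →
        ((genT6 b₁ (b₂ - b₁) b₃ ∧ t₂ = s b₁ (b₂ - b₁) b₃) ∨
          (¬ genT6 b₁ (b₂ - b₁) b₃ ∧ t₂ = 0)) →
        s b₁ b₂ b₃ = t₁ + t₂) :
    ∀ b₁ b₂ b₃, genT6 b₁ b₂ b₃ → s b₁ b₂ b₃ = 0 := by
  have v132 : s 1 3 2 = 0 := hvan 1 3 2 (by decide) (by decide)
  have v432 : s 4 3 2 = 0 := hvan 4 3 2 (by decide) (by decide)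
  have h122 : s 1 2 2 = 0 := by
    have e := hblow 1 3 2 (by decide) (by decide) (by decide) (by decide) (s 4 3 2) (s 1 2 2) (Or.inl ⟨by decide, by rw [show ((1:ZMod 6) - 3) = 4 from by decide]⟩) (Or.inl ⟨by decide, by rw [show ((3:ZMod 6) - 1) = 2 from by decide]⟩)
    rw [v132, v432] at e
    simpa using e.symm
  have h212 : s 2 1 2 = 0 := (hswap₁ 2 1 2 (by decide)).trans h122
  have h221 : s 2 2 1 = 0 := (hswap₂ 2 2 1 (by decide)).trans h212
  have v343 : s 3 4 3 = 0 := hvan 3 4 3 (by decide) (by decide)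
  have v133 : s 1 3 3 = 0 := hvan 1 3 3 (by decide) (by decide)
  have h143 : s 1 4 3 = 0 := by
    have e := hblow 1 4 3 (by decide) (by decide) (by decide) (by decide) (s 3 4 3) (s 1 3 3) (Or.inl ⟨by decide, by rw [show ((1:ZMod 6) - 4) = 3 from by decide]⟩) (Or.inl ⟨by decide, by rw [show ((4:ZMod 6) - 1) = 3 from by decide]⟩)
    rw [v343, v133] at e
    simpa using e
  have h413 : s 4 1 3 = 0 := (hswap₁ 4 1 3 (by decide)).trans h143
  have h134 : s 1 3 4 = 0 := (hswap₂ 1 3 4 (by decide)).trans h143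
  have h314 : s 3 1 4 = 0 := (hswap₁ 3 1 4 (by decide)).trans h134
  have h341 : s 3 4 1 = 0 := (hswap₂ 3 4 1 (by decide)).trans h314
  have h431 : s 4 3 1 = 0 := (hswap₁ 4 3 1 (by decide)).trans h341
  have v152 : s 1 5 2 = 0 := hvan 1 5 2 (by decide) (by decide)
  have v142 : s 1 4 2 = 0 := hvan 1 4 2 (by decide) (by decide)
  have h252 : s 2 5 2 = 0 := by
    have e := hblow 1 5 2 (by decide) (by decide) (by decide) (by decide) (s 2 5 2) (s 1 4 2) (Or.inl ⟨by decide, by rw [show ((1:ZMod 6) - 5) = 2 from by decide]⟩) (Or.inl ⟨by decide, by rw [show ((5:ZMod 6) - 1) = 4 from by decide]⟩)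
    rw [v152, v142] at e
    simpa using e.symm
  have h522 : s 5 2 2 = 0 := (hswap₁ 5 2 2 (by decide)).trans h252
  have h225 : s 2 2 5 = 0 := (hswap₂ 2 2 5 (by decide)).trans h252
  have v153 : s 1 5 3 = 0 := hvan 1 5 3 (by decide) (by decide)
  have h253 : s 2 5 3 = 0 := by
    have e := hblow 1 5 3 (by decide) (by decide) (by decide) (by decide) (s 2 5 3) (s 1 4 3) (Or.inl ⟨by decide, by rw [show ((1:ZMod 6) - 5) = 2 from by decide]⟩) (Or.inl ⟨by decide, by rw [show ((5:ZMod 6) - 1) = 4 from by decide]⟩)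
    rw [v153, h143] at e
    simpa using e.symm
  have h523 : s 5 2 3 = 0 := (hswap₁ 5 2 3 (by decide)).trans h253
  have h235 : s 2 3 5 = 0 := (hswap₂ 2 3 5 (by decide)).trans h253
  have h325 : s 3 2 5 = 0 := (hswap₁ 3 2 5 (by decide)).trans h235
  have h352 : s 3 5 2 = 0 := (hswap₂ 3 5 2 (by decide)).trans h325
  have h532 : s 5 3 2 = 0 := (hswap₁ 5 3 2 (by decide)).trans h352
  have v154 : s 1 5 4 = 0 := hvan 1 5 4 (by decide) (by decide)
  have v254 : s 2 5 4 = 0 := hvan 2 5 4 (by decide) (by decide)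
  have h144 : s 1 4 4 = 0 := by
    have e := hblow 1 5 4 (by decide) (by decide) (by decide) (by decide) (s 2 5 4) (s 1 4 4) (Or.inl ⟨by decide, by rw [show ((1:ZMod 6) - 5) = 2 from by decide]⟩) (Or.inl ⟨by decide, by rw [show ((5:ZMod 6) - 1) = 4 from by decide]⟩)
    rw [v154, v254] at e
    simpa using e.symm
  have h414 : s 4 1 4 = 0 := (hswap₁ 4 1 4 (by decide)).trans h144
  have h441 : s 4 4 1 = 0 := (hswap₂ 4 4 1 (by decide)).trans h414
  have h112 : s 1 1 2 = 0 := by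
    have e := hblow 2 1 2 (by decide) (by decide) (by decide) (by decide) (s 1 1 2) (s 2 5 2) (Or.inl ⟨by decide, by rw [show ((2:ZMod 6) - 1) = 1 from by decide]⟩) (Or.inl ⟨by decide, by rw [show ((1:ZMod 6) - 2) = 5 from by decide]⟩)
    rw [h212, h252] at e
    simpa using e.symm
  have h121 : s 1 2 1 = 0 := (hswap₂ 1 2 1 (by decide)).trans h112
  have h211 : s 2 1 1 = 0 := (hswap₁ 2 1 1 (by decide)).trans h121
  have v213 : s 2 1 3 = 0 := hvan 2 1 3 (by decide) (by decide)
  have h113 : s 1 1 3 = 0 := by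
    have e := hblow 2 1 3 (by decide) (by decide) (by decide) (by decide) (s 1 1 3) (s 2 5 3) (Or.inl ⟨by decide, by rw [show ((2:ZMod 6) - 1) = 1 from by decide]⟩) (Or.inl ⟨by decide, by rw [show ((1:ZMod 6) - 2) = 5 from by decide]⟩)
    rw [v213, h253] at e
    simpa using e.symm
  have h131 : s 1 3 1 = 0 := (hswap₂ 1 3 1 (by decide)).trans h113
  have h311 : s 3 1 1 = 0 := (hswap₁ 3 1 1 (by decide)).trans h131
  have h232 : s 2 3 2 = 0 := by
    have e := hblow 2 3 2 (by decide) (by decide) (by decide) (by decide) (s 5 3 2) (s 2 1 2) (Or.inl ⟨by decide, by rw [show ((2:ZMod 6) - 3) = 5 from by decide]⟩) (Or.inl ⟨by decide, by rw [show ((3:ZMod 6) - 2) = 1 from by decide]⟩)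
    rw [h532, h212] at e
    simpa using e
  have h322 : s 3 2 2 = 0 := (hswap₁ 3 2 2 (by decide)).trans h232
  have h223 : s 2 2 3 = 0 := (hswap₂ 2 2 3 (by decide)).trans h232
  have v215 : s 2 1 5 = 0 := hvan 2 1 5 (by decide) (by decide)
  have h535 : s 5 3 5 = 0 := by
    have e := hblow 2 3 5 (by decide) (by decide) (by decide) (by decide) (s 5 3 5) (s 2 1 5) (Or.inl ⟨by decide, by rw [show ((2:ZMod 6) - 3) = 5 from by decide]⟩) (Or.inl ⟨by decide, by rw [show ((3:ZMod 6) - 2) = 1 from by decide]⟩)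
    rw [h235, v215] at e
    simpa using e.symm
  have h355 : s 3 5 5 = 0 := (hswap₁ 3 5 5 (by decide)).trans h535
  have h553 : s 5 5 3 = 0 := (hswap₂ 5 5 3 (by decide)).trans h535
  have v243 : s 2 4 3 = 0 := hvan 2 4 3 (by decide) (by decide)
  have h443 : s 4 4 3 = 0 := by
    have e := hblow 2 4 3 (by decide) (by decide) (by decide) (by decide) (s 4 4 3) (s 2 2 3) (Or.inl ⟨by decide, by rw [show ((2:ZMod 6) - 4) = 4 from by decide]⟩) (Or.inl ⟨by decide, by rw [show ((4:ZMod 6) - 2) = 2 from by decide]⟩)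
    rw [v243, h223] at e
    simpa using e.symm
  have h434 : s 4 3 4 = 0 := (hswap₂ 4 3 4 (by decide)).trans h443
  have h344 : s 3 4 4 = 0 := (hswap₁ 3 4 4 (by decide)).trans h434
  have v245 : s 2 4 5 = 0 := hvan 2 4 5 (by decide) (by decide)
  have h445 : s 4 4 5 = 0 := by
    have e := hblow 2 4 5 (by decide) (by decide) (by decide) (by decide) (s 4 4 5) (s 2 2 5) (Or.inl ⟨by decide, by rw [show ((2:ZMod 6) - 4) = 4 from by decide]⟩) (Or.inl ⟨by decide, by rw [show ((4:ZMod 6) - 2) = 2 from by decide]⟩)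
    rw [v245, h225] at e
    simpa using e.symm
  have h454 : s 4 5 4 = 0 := (hswap₂ 4 5 4 (by decide)).trans h445
  have h544 : s 5 4 4 = 0 := (hswap₁ 5 4 4 (by decide)).trans h454
  have v345 : s 3 4 5 = 0 := hvan 3 4 5 (by decide) (by decide)
  have v315 : s 3 1 5 = 0 := hvan 3 1 5 (by decide) (by decide)
  have h545 : s 5 4 5 = 0 := by
    have e := hblow 3 4 5 (by decide) (by decide) (by decide) (by decide) (s 5 4 5) (s 3 1 5) (Or.inl ⟨by decide, by rw [show ((3:ZMod 6) - 4) = 5 from by decide]⟩) (Or.inl ⟨by decide, by rw [show ((4:ZMod 6) - 3) = 1 from by decide]⟩)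
    rw [v345, v315] at e
    simpa using e.symm
  have h455 : s 4 5 5 = 0 := (hswap₁ 4 5 5 (by decide)).trans h545
  have h554 : s 5 5 4 = 0 := (hswap₂ 5 5 4 (by decide)).trans h545
  have v415 : s 4 1 5 = 0 := hvan 4 1 5 (by decide) (by decide)
  have h555 : s 5 5 5 = 0 := by
    have e := hblow 4 5 5 (by decide) (by decide) (by decide) (by decide) (s 5 5 5) (s 4 1 5) (Or.inl ⟨by decide, by rw [show ((4:ZMod 6) - 5) = 5 from by decide]⟩) (Or.inl ⟨by decide, by rw [show ((5:ZMod 6) - 4) = 1 from by decide]⟩)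
    rw [h455, v415] at e
    simpa using e.symm
  have v521 : s 5 2 1 = 0 := hvan 5 2 1 (by decide) (by decide)
  have h111 : s 1 1 1 = 0 := by
    have e := hblow 1 2 1 (by decide) (by decide) (by decide) (by decide) (s 5 2 1) (s 1 1 1) (Or.inl ⟨by decide, by rw [show ((1:ZMod 6) - 2) = 5 from by decide]⟩) (Or.inl ⟨by decide, by rw [show ((2:ZMod 6) - 1) = 1 from by decide]⟩)
    rw [h121, v521] at e
    simpa using e.symm
  intro b₁ b₂ b₃ h
  by_cases hv : b₁ = 0 ∨ b₂ = 0 ∨ b₃ = 0 ∨ b₁ + b₂ = 0 ∨ b₁ + b₃ = 0 ∨ b₂ + b₃ = 0 ∨ b₁ + b₂ + b₃ = 0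
  · exact hvan b₁ b₂ b₃ h hv
  · have hcase : ∀ x y z : ZMod 6, genT6 x y z → ¬(x = 0 ∨ y = 0 ∨ z = 0 ∨ x + y = 0 ∨ x + z = 0 ∨ y + z = 0 ∨ x + y + z = 0) → (x = 1 ∧ y = 1 ∧ z = 1) ∨ (x = 1 ∧ y = 1 ∧ z = 2) ∨ (x = 1 ∧ y = 1 ∧ z = 3) ∨ (x = 1 ∧ y = 2 ∧ z = 1) ∨ (x = 1 ∧ y = 2 ∧ z = 2) ∨ (x = 1 ∧ y = 3 ∧ z = 1) ∨ (x = 1 ∧ y = 3 ∧ z = 4) ∨ (x = 1 ∧ y = 4 ∧ z = 3) ∨ (x = 1 ∧ y = 4 ∧ z = 4) ∨ (x = 2 ∧ y = 1 ∧ z = 1) ∨ (x = 2 ∧ y = 1 ∧ z = 2) ∨ (x = 2 ∧ y = 2 ∧ z = 1) ∨ (x = 2 ∧ y = 2 ∧ z = 3) ∨ (x = 2 ∧ y = 2 ∧ z = 5) ∨ (x = 2 ∧ y = 3 ∧ z = 2) ∨ (x = 2 ∧ y = 3 ∧ z = 5) ∨ (x = 2 ∧ y = 5 ∧ z = 2)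 ∨ (x = 2 ∧ y = 5 ∧ z = 3) ∨ (x = 3 ∧ y = 1 ∧ z = 1) ∨ (x = 3 ∧ y = 1 ∧ z = 4) ∨ (x = 3 ∧ y = 2 ∧ z = 2) ∨ (x = 3 ∧ y = 2 ∧ z = 5) ∨ (x = 3 ∧ y = 4 ∧ z = 1) ∨ (x = 3 ∧ y = 4 ∧ z = 4) ∨ (x = 3 ∧ y = 5 ∧ z = 2) ∨ (x = 3 ∧ y = 5 ∧ z = 5) ∨ (x = 4 ∧ y = 1 ∧ z = 3) ∨ (x = 4 ∧ y = 1 ∧ z = 4) ∨ (x = 4 ∧ y = 3 ∧ z = 1) ∨ (x = 4 ∧ y = 3 ∧ z = 4) ∨ (x = 4 ∧ y = 4 ∧ z = 1) ∨ (x = 4 ∧ y = 4 ∧ z = 3) ∨ (x = 4 ∧ y = 4 ∧ z = 5) ∨ (x = 4 ∧ y = 5 ∧ z = 4) ∨ (x = 4 ∧ y = 5 ∧ z = 5) ∨ (x = 5 ∧ y = 2 ∧ z = 2) ∨ (x = 5 ∧ y = 2 ∧ z = 3) ∨ (x = 5 ∧ y = 3 ∧ z = 2) ∨ (x = 5 ∧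 y = 3 ∧ z = 5) ∨ (x = 5 ∧ y = 4 ∧ z = 4) ∨ (x = 5 ∧ y = 4 ∧ z = 5) ∨ (x = 5 ∧ y = 5 ∧ z = 3) ∨ (x = 5 ∧ y = 5 ∧ z = 4) ∨ (x = 5 ∧ y = 5 ∧ z = 5) := by set_option synthInstance.maxSize 10000 in set_option maxHeartbeats 1000000 in decide
    rcases hcase b₁ b₂ b₃ h hv with ⟨rfl,rfl,rfl⟩|⟨rfl,rfl,rfl⟩|⟨rfl,rfl,rfl⟩|⟨rfl,rfl,rfl⟩|⟨rfl,rfl,rfl⟩|⟨rfl,rfl,rfl⟩|⟨rfl,rfl,rfl⟩|⟨rfl,rfl,rfl⟩|⟨rfl,rfl,rfl⟩|⟨rfl,rfl,rfl⟩|⟨rfl,rfl,rfl⟩|⟨rfl,rfl,rfl⟩|⟨rfl,rfl,rfl⟩|⟨rfl,rfl,rfl⟩|⟨rfl,rfl,rfl⟩|⟨rfl,rfl,rfl⟩|⟨rfl,rfl,rfl⟩|⟨rfl,rfl,rfl⟩|⟨rfl,rfl,rfl⟩|⟨rfl,rfl,rfl⟩|⟨rfl,rfl,rfl⟩|⟨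rfl,rfl,rfl⟩|⟨rfl,rfl,rfl⟩|⟨rfl,rfl,rfl⟩|⟨rfl,rfl,rfl⟩|⟨rfl,rfl,rfl⟩|⟨rfl,rfl,rfl⟩|⟨rfl,rfl,rfl⟩|⟨rfl,rfl,rfl⟩|⟨rfl,rfl,rfl⟩|⟨rfl,rfl,rfl⟩|⟨rfl,rfl,rfl⟩|⟨rfl,rfl,rfl⟩|⟨rfl,rfl,rfl⟩|⟨rfl,rfl,rfl⟩|⟨rfl,rfl,rfl⟩|⟨rfl,rfl,rfl⟩|⟨rfl,rfl,rfl⟩|⟨rfl,rfl,rfl⟩|⟨rfl,rfl,rfl⟩|⟨rfl,rfl,rfl⟩|⟨rfl,rfl,rfl⟩|⟨rfl,rfl,rfl⟩|⟨rfl,rfl,rfl⟩ <;> assumption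
end

section
/- If G is a subgroup of PGL₂(ℂ) isomorphic to the Klein four group ℤ/2 × ℤ/2, then there is no point of ℙ¹(ℂ) fixed by every element of G. -/
/-- The projective linear group `PGL₂(ℂ)` as the quotient of `GL₂(ℂ)` by its center. -/
abbrev PGL2C : Type _ :=
  GL (Fin 2) ℂ ⧸ Subgroup.center (GL (Fin 2) ℂ)

/-- A point of `ℙ¹(ℂ)` is fixed by an element `g` of `PGL₂(ℂ)` if any matrix
representative of `g` sends a representative vector to a scalar multiple of itself. -/
def PGL2CFixes (g : PGL2C) (p : Projectivization ℂ (Fin 2 → ℂ)) : Prop :=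
  ∀ M : GL (Fin 2) ℂ, (QuotientGroup.mk M : PGL2C) = g →
    ∃ c : ℂ, (M : Matrix (Fin 2) (Fin 2) ℂ).mulVec p.rep = c • p.rep

lemma scalar_mem_center_GL2 (a : ℂ) (M : GL (Fin 2) ℂ)
    (h : (M : Matrix (Fin 2) (Fin 2) ℂ) = a • 1) : M ∈ Subgroup.center (GL (Fin 2) ℂ) := by
  rw [Subgroup.mem_center_iff]
  intro g
  ext : 1
  push_cast
  rw [h]
  simp [Matrix.mul_smul, Matrix.smul_mul]

lemma mem_center_GL2_scalar (M : GL (Fin 2) ℂ)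
    (h : M ∈ Subgroup.center (GL (Fin 2) ℂ)) :
    ∃ a : ℂ, (M : Matrix (Fin 2) (Fin 2) ℂ) = a • 1 := by
  rw [Subgroup.mem_center_iff] at h
  set U : GL (Fin 2) ℂ := ⟨!![1,1;0,1], !![1,-1;0,1],
    by ext i j; fin_cases i <;> fin_cases j <;> simp [Matrix.mul_apply, Fin.sum_univ_two],
    by ext i j; fin_cases i <;> fin_cases j <;> simp [Matrix.mul_apply, Fin.sum_univ_two]⟩ with hU
  set L : GL (Fin 2) ℂ := ⟨!![1,0;1,1], !![1,0;-1,1],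
    by ext i j; fin_cases i <;> fin_cases j <;> simp [Matrix.mul_apply, Fin.sum_univ_two],
    by ext i j; fin_cases i <;> fin_cases j <;> simp [Matrix.mul_apply, Fin.sum_univ_two]⟩ with hL
  have hu := congrArg (Units.val) (h U)
  have hl := congrArg (Units.val) (h L)
  push_cast at hu hl
  set A := (M : Matrix (Fin 2) (Fin 2) ℂ) with hA
  refine ⟨A 0 0, ?_⟩
  have hu00 := congrFun (congrFun hu 0) 0
  have hu01 := congrFun (congrFun hu 0) 1
  have hl00 := congrFun (congrFun hl 0) 0
  simp [hU, hL, Matrix.mul_apply, Fin.sum_univ_two] at hu00 hu01 hl00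
  rw [Matrix.eta_fin_two A, hl00, hu00, show A 1 1 = A 0 0 by linear_combination hu01]
  ext i j
  fin_cases i <;> fin_cases j <;> simp [Matrix.one_apply]

lemma key_involution (g : PGL2C) (hg1 : g ≠ 1) (hg2 : g ^ 2 = 1) (M : GL (Fin 2) ℂ)
    (hM : (QuotientGroup.mk M : PGL2C) = g) (v : Fin 2 → ℂ) (hv : v ≠ 0) (μ : ℂ)
    (hMv : (M : Matrix (Fin 2) (Fin 2) ℂ).mulVec v = μ • v) :
    μ ^ 2 = -((M : Matrix (Fin 2) (Fin 2) ℂ).det) := by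
  set A := (M : Matrix (Fin 2) (Fin 2) ℂ) with hA
  -- μ ≠ 0
  have hdet : A.det ≠ 0 := by
    intro h0
    have : IsUnit A.det := (Matrix.isUnit_iff_isUnit_det A).mp M.isUnit
    exact this.ne_zero h0
  have hμ : μ ≠ 0 := by
    intro h0
    subst h0
    simp only [zero_smul] at hMv
    have : ((M⁻¹ : GL (Fin 2) ℂ) : Matrix (Fin 2) (Fin 2) ℂ).mulVec (A.mulVec v) = v := by
      rw [Matrix.mulVec_mulVec]
      have : ((M⁻¹ : GL (Fin 2) ℂ) : Matrix (Fin 2) (Fin 2) ℂ) * A = 1 := by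
        rw [hA, ← Units.val_mul, inv_mul_cancel, Units.val_one]
      rw [this, Matrix.one_mulVec]
    rw [hMv, Matrix.mulVec_zero] at this
    exact hv this.symm
  -- M * M is central, hence scalar
  have hsq : (QuotientGroup.mk (M * M) : PGL2C) = 1 := by
    have : (QuotientGroup.mk (M * M) : PGL2C) = g * g := by
      rw [QuotientGroup.mk_mul, hM]
    rw [this, ← pow_two, hg2]
  have hcen : M * M ∈ Subgroup.center (GL (Fin 2) ℂ) := by
    rwa [QuotientGroup.eq_one_iff] at hsq
  obtain ⟨l, hl⟩ := mem_center_GL2_scalar _ hcen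
  have hAA : A * A = l • 1 := by rw [hA]; push_cast [← Units.val_mul] at hl ⊢; exact hl
  -- l = μ^2
  have hlv : (A * A).mulVec v = (μ ^ 2) • v := by
    rw [← Matrix.mulVec_mulVec, hMv, Matrix.mulVec_smul, hMv, smul_smul, ← pow_two]
  have hlv' : (A * A).mulVec v = l • v := by rw [hAA, Matrix.smul_mulVec, Matrix.one_mulVec]
  have hlμ : l = μ ^ 2 := by
    have h2 : (μ ^ 2 - l) • v = 0 := by rw [sub_smul, ← hlv, ← hlv', sub_self]
    rcases smul_eq_zero.mp h2 with h | h
    · exact (sub_eq_zero.mp h).symm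
    · exact absurd h hv
  subst hlμ
  -- det A = ± μ^2
  have hdet2 : A.det * A.det = μ ^ 2 * μ ^ 2 := by
    have : (A * A).det = ((μ ^ 2) • (1 : Matrix (Fin 2) (Fin 2) ℂ)).det := by rw [hAA]
    rw [Matrix.det_mul] at this
    rw [this, Matrix.det_smul, Matrix.det_one]
    simp [Fintype.card_fin]
    ring
  have hcases : A.det = μ ^ 2 ∨ A.det = -(μ ^ 2) := by
    have : (A.det - μ ^ 2) * (A.det + μ ^ 2) = 0 := by ring_nf; linear_combination hdet2
    rcases mul_eq_zero.mp this with h | h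
    · exact Or.inl (by linear_combination h)
    · exact Or.inr (by linear_combination h)
  rcases hcases with hcase | hcase
  · -- then A is scalar, contradiction with g ≠ 1
    exfalso
    -- entry equations
    have e00 := congrFun (congrFun hAA 0) 0
    have e01 := congrFun (congrFun hAA 0) 1
    have e10 := congrFun (congrFun hAA 1) 0
    simp [Matrix.mul_apply, Fin.sum_univ_two, Matrix.one_apply] at e00 e01 e10
    have hdetA : A 0 0 * A 1 1 - A 0 1 * A 1 0 = μ ^ 2 := by
      rw [← Matrix.det_fin_two, hcase]
    have ev0 : A 0 0 * v 0 + A 0 1 * v 1 = μ * v 0 := by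
      have := congrFun hMv 0
      simpa [Matrix.mulVec, dotProduct, Fin.sum_univ_two] using this
    have ev1 : A 1 0 * v 0 + A 1 1 * v 1 = μ * v 1 := by
      have := congrFun hMv 1
      simpa [Matrix.mulVec, dotProduct, Fin.sum_univ_two] using this
    by_cases ht : A 0 0 + A 1 1 = 0
    · -- trace zero forces μ = 0
      apply hμ
      have hres : A 0 0 * (A 0 0 + A 1 1) = 2 * μ ^ 2 := by linear_combination e00 + hdetA
      rw [ht, mul_zero] at hres
      exact pow_eq_zero_iff (n := 2) (by norm_num) |>.mp (by linear_combination -hres / 2)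
    · have hb : A 0 1 = 0 := by
        rcases mul_eq_zero.mp (show A 0 1 * (A 0 0 + A 1 1) = 0 by linear_combination e01) with h | h
        · exact h
        · exact absurd h ht
      have hc : A 1 0 = 0 := by
        rcases mul_eq_zero.mp (show A 1 0 * (A 0 0 + A 1 1) = 0 by linear_combination e10) with h | h
        · exact h
        · exact absurd h ht
      have ha2 : A 0 0 * A 0 0 = μ ^ 2 := by linear_combination e00 - A 1 0 * hb - A 0 1 * hc + hb * A 1 0
      have hadmu : A 0 0 * A 1 1 = μ ^ 2 := by linear_combination hdetA + A 1 0 * hb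
      have ha0 : A 0 0 ≠ 0 := by
        intro h0
        apply hμ
        have : μ ^ 2 = 0 := by linear_combination -ha2 + A 0 0 * h0
        exact pow_eq_zero_iff (n := 2) (by norm_num) |>.mp this
      have had : A 1 1 = A 0 0 :=
        mul_left_cancel₀ ha0 (by linear_combination hadmu - ha2)
      -- eigenvalue equation gives A 0 0 = μ
      have haμ : A 0 0 = μ := by
        have hv' : v 0 ≠ 0 ∨ v 1 ≠ 0 := by
          by_contra hcon
          push_neg at hcon
          apply hv
          funext i
          fin_cases i
          · exact hcon.1
          · exact hcon.2
        rcases hv' with h | h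
        · have : A 0 0 * v 0 = μ * v 0 := by linear_combination ev0 - v 1 * hb
          exact mul_right_cancel₀ h this
        · have : A 1 1 * v 1 = μ * v 1 := by linear_combination ev1 - v 0 * hc
          have := mul_right_cancel₀ h this
          rw [← had]; exact this
      have hAs : A = μ • 1 := by
        rw [Matrix.eta_fin_two A, hb, hc, had, haμ]
        ext i j
        fin_cases i <;> fin_cases j <;> simp [Matrix.one_apply]
      have : M ∈ Subgroup.center (GL (Fin 2) ℂ) := scalar_mem_center_GL2 μ M (by rw [← hA]; exact hAs)
      apply hg1
      rw [← hM, QuotientGroup.eq_one_iff]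
      exact this
  · rw [hcase]; ring

/-- A subgroup of `PGL₂(ℂ)` isomorphic to the Klein four group `ℤ/2 × ℤ/2`
has no fixed point on `ℙ¹(ℂ)`. -/
theorem klein_four_in_PGL2_no_fixed_point (G : Subgroup PGL2C)
    (hG : Nonempty (G ≃* Multiplicative (ZMod 2 × ZMod 2))) :
    ¬ ∃ p : Projectivization ℂ (Fin 2 → ℂ), ∀ g ∈ G, PGL2CFixes g p := by
  rintro ⟨p, hp⟩
  obtain ⟨e⟩ := hG
  set v := p.rep with hvdef
  have hv : v ≠ 0 := p.rep_nonzero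
  -- two generators
  set x : G := e.symm (Multiplicative.ofAdd ((1 : ZMod 2), (0 : ZMod 2))) with hx
  set y : G := e.symm (Multiplicative.ofAdd ((0 : ZMod 2), (1 : ZMod 2))) with hy
  have hex : e x = Multiplicative.ofAdd ((1 : ZMod 2), (0 : ZMod 2)) := e.apply_symm_apply _
  have hey : e y = Multiplicative.ofAdd ((0 : ZMod 2), (1 : ZMod 2)) := e.apply_symm_apply _
  have hx2 : x ^ 2 = 1 := by
    apply e.injective
    rw [map_pow, hex, map_one]
    decide
  have hy2 : y ^ 2 = 1 := by
    apply e.injective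
    rw [map_pow, hey, map_one]
    decide
  have hxy2 : (x * y) ^ 2 = 1 := by
    apply e.injective
    rw [map_pow, map_mul, hex, hey, map_one]
    decide
  have hx1 : x ≠ 1 := by
    intro h
    have := hex
    rw [h, map_one] at this
    exact absurd this.symm (by decide)
  have hy1 : y ≠ 1 := by
    intro h
    have := hey
    rw [h, map_one] at this
    exact absurd this.symm (by decide)
  have hxy1 : x * y ≠ 1 := by
    intro h
    have : e (x * y) = 1 := by rw [h, map_one]
    rw [map_mul, hex, hey] at this
    exact absurd this (by decide)
  -- push to PGL2C
  set g : PGL2C := (x : PGL2C) with hg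
  set h : PGL2C := (y : PGL2C) with hh
  have hgG : g ∈ G := x.2
  have hhG : h ∈ G := y.2
  have hghG : g * h ∈ G := by rw [hg, hh, ← Subgroup.coe_mul]; exact (x * y).2
  have hg2 : g ^ 2 = 1 := by
    rw [hg, ← SubmonoidClass.coe_pow, hx2, OneMemClass.coe_one]
  have hh2 : h ^ 2 = 1 := by
    rw [hh, ← SubmonoidClass.coe_pow, hy2, OneMemClass.coe_one]
  have hgh2 : (g * h) ^ 2 = 1 := by
    rw [hg, hh, ← Subgroup.coe_mul, ← SubmonoidClass.coe_pow, hxy2, OneMemClass.coe_one]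
  have hg1 : g ≠ 1 := fun hc => hx1 (Subtype.ext (by rw [← hg]; exact hc))
  have hh1 : h ≠ 1 := fun hc => hy1 (Subtype.ext (by rw [← hh]; exact hc))
  have hgh1 : g * h ≠ 1 := fun hc => hxy1 (Subtype.ext (by
    rw [Subgroup.coe_mul, ← hg, ← hh]; exact hc))
  -- representatives
  obtain ⟨M, hM⟩ := QuotientGroup.mk_surjective g
  obtain ⟨N, hN⟩ := QuotientGroup.mk_surjective h
  obtain ⟨c, hc⟩ := hp g hgG M hM
  obtain ⟨d, hd⟩ := hp h hhG N hN
  have hMN : (QuotientGroup.mk (M * N) : PGL2C) = g * h := by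
    rw [QuotientGroup.mk_mul, hM, hN]
  have hcd : ((M * N : GL (Fin 2) ℂ) : Matrix (Fin 2) (Fin 2) ℂ).mulVec v = (c * d) • v := by
    rw [Units.val_mul, ← Matrix.mulVec_mulVec, hd, Matrix.mulVec_smul, hc, smul_smul, mul_comm]
  have k1 := key_involution g hg1 hg2 M hM v hv c hc
  have k2 := key_involution h hh1 hh2 N hN v hv d hd
  have k3 := key_involution (g * h) hgh1 hgh2 (M * N) hMN v hv (c * d) hcd
  have hdetMN : ((M * N : GL (Fin 2) ℂ) : Matrix (Fin 2) (Fin 2) ℂ).det =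
      ((M : Matrix (Fin 2) (Fin 2) ℂ)).det * ((N : Matrix (Fin 2) (Fin 2) ℂ)).det := by
    rw [Units.val_mul, Matrix.det_mul]
  rw [hdetMN] at k3
  -- (cd)^2 = -(-c^2)(-d^2) = -c^2 d^2, but also (cd)^2 = c^2 d^2
  have hc0 : c ≠ 0 := by
    intro h0
    have : ((M : Matrix (Fin 2) (Fin 2) ℂ)).det = 0 := by
      have := k1; rw [h0] at this; simpa using this.symm
    exact ((Matrix.isUnit_iff_isUnit_det _).mp M.isUnit).ne_zero this
  have hd0 : d ≠ 0 := by
    intro h0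
    have : ((N : Matrix (Fin 2) (Fin 2) ℂ)).det = 0 := by
      have := k2; rw [h0] at this; simpa using this.symm
    exact ((Matrix.isUnit_iff_isUnit_det _).mp N.isUnit).ne_zero this
  have : (2 : ℂ) * (c ^ 2 * d ^ 2) = 0 := by
    linear_combination k3 - ((N : Matrix (Fin 2) (Fin 2) ℂ)).det * k1 + c ^ 2 * k2
  have : c ^ 2 * d ^ 2 = 0 := by linear_combination this / 2
  rcases mul_eq_zero.mp this with h' | h'
  · exact hc0 (pow_eq_zero_iff (n := 2) (by norm_num) |>.mp h')
  · exact hd0 (pow_eq_zero_iff (n := 2) (by norm_num) |>.mp h')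
end
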